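/- arXiv:2305.16817 — 9 statements merged into one kernel-verified Lean document; each statement's English description precedes it below -/
import Mathlib

section
/- Let C ≥ 2 and let p : Fin C → ℝ be a probability vector (p i ≥ 0 for all i and ∑ i, p i = 1). Define the different-class resampling p̃ by p̃ i = (1 - p i)/(C - 1), and the mixture q by q i = (p i + p̃ i)/2. Then the Shannon entropy satisfies H(p) ≤ H(q), i.e. ∑ i, -(p i) * Real.log (p i) ≤ ∑ i, -(q i) * Real.log (q i). -/
open Real

/-- Entropy is at most `log C`. -/
lemma entropy_le_log_card (C : ℕ) (hC : 2 ≤ C) (p : Fin C → ℝ)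
    (hp : ∀ i, 0 ≤ p i) (hsum : ∑ i, p i = 1) :
    ∑ i, Real.negMulLog (p i) ≤ Real.log C := by
  have hCpos : (0:ℝ) < C := by positivity
  have key : ∀ i, Real.negMulLog (p i) ≤ p i * Real.log C + (1/C - p i) := by
    intro i
    rcases eq_or_lt_of_le (hp i) with h | h
    · have h0 : Real.negMulLog (p i) = 0 := by rw [← h]; simp
      rw [h0, ← h]
      have : (0:ℝ) ≤ 1/C := by positivity
      linarith
    · have hlog : Real.log (1/(C * p i)) ≤ 1/(C * p i) - 1 :=
        Real.log_le_sub_one_of_pos (by positivity)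
      have h1 : Real.log (1/(C * p i)) = -Real.log C - Real.log (p i) := by
        rw [one_div, Real.log_inv, Real.log_mul (ne_of_gt hCpos) (ne_of_gt h)]
        ring
      have h2 : p i * Real.log (1/(C * p i)) ≤ p i * (1/(C * p i) - 1) :=
        mul_le_mul_of_nonneg_left hlog (hp i)
      rw [h1] at h2
      have h3 : p i * (1/(C * p i) - 1) = 1/C - p i := by
        field_simp
      rw [h3] at h2
      have : Real.negMulLog (p i) = p i * (-Real.log C - Real.log (p i)) + p i * Real.log C := by
        simp [Real.negMulLog]; ring
      linarith
  calc ∑ i, Real.negMulLog (p i) ≤ ∑ i, (p i * Real.log C + (1/C - p i)) :=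
        Finset.sum_le_sum fun i _ => key i
    _ = Real.log C := by
        rw [Finset.sum_add_distrib, ← Finset.sum_mul, hsum, Finset.sum_sub_distrib, hsum]
        simp [Finset.sum_const, Finset.card_univ]
        field_simp
        norm_num

/-- Theorem 1 (regression toward the mean): mixing `p` with its different-class
resampling `p̃ i = (1 - p i)/(C - 1)` yields a distribution `q = (p + p̃)/2`
whose Shannon entropy is at least that of `p`. -/
theorem selective_mixup_entropy_le (C : ℕ) (hC : 2 ≤ C) (p : Fin C → ℝ)
    (hp : ∀ i, 0 ≤ p i) (hsum : ∑ i, p i = 1) :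
    ∑ i, -(p i) * Real.log (p i) ≤
      ∑ i, -((p i + (1 - p i) / ((C : ℝ) - 1)) / 2) *
        Real.log ((p i + (1 - p i) / ((C : ℝ) - 1)) / 2) := by
  have hCpos : (0:ℝ) < C := by positivity
  have hC2 : (2:ℝ) ≤ C := by exact_mod_cast hC
  have hC1 : (0:ℝ) < (C:ℝ) - 1 := by linarith
  set a : ℝ := ((C:ℝ) - 2) / (2 * ((C:ℝ) - 1)) with ha_def
  have ha0 : 0 ≤ a := by apply div_nonneg <;> linarith
  have ha1 : a ≤ 1 := by
    rw [ha_def, div_le_one (by linarith)]; linarith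
  have hb0 : 0 ≤ 1 - a := by linarith
  have hq : ∀ i, (p i + (1 - p i) / ((C : ℝ) - 1)) / 2 = a * p i + (1 - a) * (1/C) := by
    intro i
    rw [ha_def]
    field_simp
    ring
  have hconc : ∀ i, a * Real.negMulLog (p i) + (1 - a) * Real.negMulLog (1/C) ≤
      Real.negMulLog ((p i + (1 - p i) / ((C : ℝ) - 1)) / 2) := by
    intro i
    rw [hq i]
    exact Real.concaveOn_negMulLog.2 (Set.mem_Ici.mpr (hp i))
      (Set.mem_Ici.mpr (by positivity)) ha0 hb0 (by ring)
  have hu : Real.negMulLog (1/(C:ℝ)) = (1/C) * Real.log C := by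
    simp [Real.negMulLog, one_div, Real.log_inv]
  have hHle : ∑ i, Real.negMulLog (p i) ≤ Real.log C :=
    entropy_le_log_card C hC p hp hsum
  have hsum2 : ∑ i, (a * Real.negMulLog (p i) + (1 - a) * Real.negMulLog (1/(C:ℝ)))
      = a * ∑ i, Real.negMulLog (p i) + (1 - a) * Real.log C := by
    rw [Finset.sum_add_distrib, ← Finset.mul_sum, Finset.sum_const, Finset.card_univ,
      Fintype.card_fin, hu, nsmul_eq_mul]
    congr 1
    field_simp
  have step : ∑ i, Real.negMulLog (p i) ≤
      ∑ i, Real.negMulLog ((p i + (1 - p i) / ((C : ℝ) - 1)) / 2) := by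
    calc ∑ i, Real.negMulLog (p i)
        = a * ∑ i, Real.negMulLog (p i) + (1 - a) * ∑ i, Real.negMulLog (p i) := by ring
      _ ≤ a * ∑ i, Real.negMulLog (p i) + (1 - a) * Real.log C := by
          have := mul_le_mul_of_nonneg_left hHle hb0; linarith
      _ = ∑ i, (a * Real.negMulLog (p i) + (1 - a) * Real.negMulLog (1/(C:ℝ))) := hsum2.symm
      _ ≤ _ := Finset.sum_le_sum fun i _ => hconc i
  simpa [Real.negMulLog] using step
end

section
/- Let C ≥ 2 and let p : Fin C → ℝ be a probability vector (p i ≥ 0 for all i and ∑ i, p i = 1). Define p̃ i = (1 - p i)/(C - 1). Then H(p) ≤ H(p̃), where H denotes Shannon entropy, i.e. ∑ i, -(p i) * Real.log (p i) ≤ ∑ i, -(p̃ i) * Real.log (p̃ i). -/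
/-- Key intermediate inequality of Theorem 1: the different-class resampling
`p̃ i = (1 - p i)/(C - 1)` has entropy at least that of `p`. -/
theorem resampled_entropy_le (C : ℕ) (hC : 2 ≤ C) (p : Fin C → ℝ)
    (hp : ∀ i, 0 ≤ p i) (hsum : ∑ i, p i = 1) :
    ∑ i, -(p i) * Real.log (p i) ≤
      ∑ i, -((1 - p i) / ((C : ℝ) - 1)) *
        Real.log ((1 - p i) / ((C : ℝ) - 1)) := by
  have hCpos : (0:ℝ) < (C:ℝ) - 1 := by
    have : (2:ℝ) ≤ (C:ℝ) := by exact_mod_cast hC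
    linarith
  set c : ℝ := (C:ℝ) - 1 with hc
  have hcard : ∀ i : Fin C, (Finset.univ.erase i).card = C - 1 := by
    intro i
    rw [Finset.card_erase_of_mem (Finset.mem_univ i), Finset.card_univ, Fintype.card_fin]
  have hcardR : ((C - 1 : ℕ) : ℝ) = c := by
    rw [hc]
    have : (1:ℕ) ≤ C := by omega
    push_cast [this]
    ring
  have key : ∀ i : Fin C,
      ∑ j ∈ Finset.univ.erase i, (1/c) • Real.negMulLog (p j) ≤
        Real.negMulLog ((1 - p i) / c) := by
    intro i
    have hsum' : ∑ j ∈ Finset.univ.erase i, p j = 1 - p i := by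
      rw [Finset.sum_erase_eq_sub (Finset.mem_univ i), hsum]
    have hw : ∑ j ∈ Finset.univ.erase i, (1/c) = 1 := by
      rw [Finset.sum_const, hcard, nsmul_eq_mul, hcardR]
      field_simp
    have := Real.concaveOn_negMulLog.le_map_sum
      (t := Finset.univ.erase i) (w := fun _ => 1/c) (p := p)
      (fun j _ => by positivity) hw (fun j _ => hp j)
    convert this using 2
    · rfl
    rw [← Finset.smul_sum, hsum', smul_eq_mul]
    ring
  calc ∑ i, -(p i) * Real.log (p i)
      = ∑ i, ∑ j ∈ Finset.univ.erase i, (1/c) • Real.negMulLog (p j) := by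
        have : ∀ i : Fin C, ∑ j ∈ Finset.univ.erase i, (1/c) • Real.negMulLog (p j)
            = (∑ j, (1/c) • Real.negMulLog (p j)) - (1/c) • Real.negMulLog (p i) := by
          intro i
          rw [Finset.sum_erase_eq_sub (Finset.mem_univ i)]
        simp only [this, Finset.sum_sub_distrib, smul_eq_mul, ← Finset.mul_sum,
          Finset.sum_const, Finset.card_univ, Fintype.card_fin, nsmul_eq_mul]
        have hlhs : ∀ i : Fin C, -(p i) * Real.log (p i) = Real.negMulLog (p i) := by
          intro i; simp [Real.negMulLog]
        simp only [hlhs]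
        have hinner : ∀ i : Fin C, ∑ j ∈ Finset.univ.erase i, Real.negMulLog (p j)
            = (∑ j, Real.negMulLog (p j)) - Real.negMulLog (p i) :=
          fun i => Finset.sum_erase_eq_sub (Finset.mem_univ i)
        simp only [hinner, Finset.sum_sub_distrib, Finset.sum_const, Finset.card_univ,
          Fintype.card_fin, nsmul_eq_mul]
        have hcne : c ≠ 0 := ne_of_gt hCpos
        have hCc : (C:ℝ) = c + 1 := by rw [hc]; ring
        rw [hCc]
        field_simp
        ring
    _ ≤ ∑ i, Real.negMulLog ((1 - p i) / c) := Finset.sum_le_sum fun i _ => key i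
    _ = ∑ i, -((1 - p i) / c) * Real.log ((1 - p i) / c) := by
        simp [Real.negMulLog, neg_mul]
end

section
/- Let C ≥ 2 and let p : Fin C → ℝ be a probability vector (p i ≥ 0 for all i and ∑ i, p i = 1). Define p̃ i = (1 - p i)/(C - 1) and the mixture q i = (p i + p̃ i)/2. Then for every i, q i = ((C - 2) * p i + 1)/(2 * (C - 1)); in particular |q i - 1/C| ≤ |p i - 1/C| for every i. -/
/-!
The map `x ↦ (x + (1 - x) / (C - 1)) / 2` is affine with slope `(C - 2) / (2 (C - 1)) ∈ [0, 1/2)`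
and fixes `1 / C`, so it contracts every coordinate toward the uniform value.
-/

section Field

variable {K : Type*} [Field K] {c : K}

theorem mixture_eq_closed_form (hc : c ≠ 1) (x : K) :
    (x + (1 - x) / (c - 1)) / 2 = ((c - 2) * x + 1) / (2 * (c - 1)) := by
  have hc1 : c - 1 ≠ 0 := sub_ne_zero.mpr hc
  rw [mul_comm 2 (c - 1), ← div_div]
  congr 1
  field_simp
  ring

end Field

section LinearOrderedField

variable {K : Type*} [Field K] [LinearOrder K] [IsStrictOrderedRing K] {c : K}

theorem mixture_sub_inv_eq_mul (hc : 2 ≤ c) (x : K) :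
    (x + (1 - x) / (c - 1)) / 2 - 1 / c = (c - 2) / (2 * (c - 1)) * (x - 1 / c) := by
  have hc0 : c ≠ 0 := by positivity
  have hc1 : c - 1 ≠ 0 := by linarith
  field_simp
  ring

theorem abs_mixture_slope_le_one (hc : 2 ≤ c) : |(c - 2) / (2 * (c - 1))| ≤ 1 := by
  rw [abs_of_nonneg (by apply div_nonneg <;> linarith), div_le_one (by linarith)]
  linarith

theorem abs_mixture_sub_inv_le (hc : 2 ≤ c) (x : K) :
    |(x + (1 - x) / (c - 1)) / 2 - 1 / c| ≤ |x - 1 / c| := by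
  rw [mixture_sub_inv_eq_mul hc, abs_mul]
  exact mul_le_of_le_one_left (abs_nonneg _) (abs_mixture_slope_le_one hc)

end LinearOrderedField

theorem mixture_closed_form_and_shrinkage_general (C : ℕ) (hC : 2 ≤ C) (p : Fin C → ℝ) :
    ∀ i,
      (p i + (1 - p i) / ((C : ℝ) - 1)) / 2
          = (((C : ℝ) - 2) * p i + 1) / (2 * ((C : ℝ) - 1)) ∧
      |(p i + (1 - p i) / ((C : ℝ) - 1)) / 2 - 1 / C| ≤ |p i - 1 / C| := by
  have hC' : (2 : ℝ) ≤ C := by exact_mod_cast hC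
  exact fun i =>
    ⟨mixture_eq_closed_form (by linarith) (p i), abs_mixture_sub_inv_le hC' (p i)⟩

/-- Closed form of the mixture `q = (p + p̃)/2` and its pointwise shrinkage
toward the uniform value `1/C`. -/
theorem mixture_closed_form_and_shrinkage (C : ℕ) (hC : 2 ≤ C) (p : Fin C → ℝ)
    (hp : ∀ i, 0 ≤ p i) (hsum : ∑ i, p i = 1) :
    ∀ i,
      (p i + (1 - p i) / ((C : ℝ) - 1)) / 2
          = (((C : ℝ) - 2) * p i + 1) / (2 * ((C : ℝ) - 1)) ∧
      |(p i + (1 - p i) / ((C : ℝ) - 1)) / 2 - 1 / C| ≤ |p i - 1 / C| :=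
  mixture_closed_form_and_shrinkage_general C hC p
end

section
/- Let C ≥ 2 and let p : Fin C → ℝ be a probability vector (p i ≥ 0 for all i and ∑ i, p i = 1). Define p̃ i = (1 - p i)/(C - 1) and q i = (p i + p̃ i)/2. Then H(p) = H(q) if and only if p is the uniform distribution, i.e. p i = 1/C for all i. (Here H denotes Shannon entropy.) -/
open Finset Real

/-- Equality case of Theorem 1: `H(p) = H(q)` with `q = (p + p̃)/2` iff `p` is
the uniform distribution. -/
theorem entropy_eq_iff_uniform (C : ℕ) (hC : 2 ≤ C) (p : Fin C → ℝ)
    (hp : ∀ i, 0 ≤ p i) (hsum : ∑ i, p i = 1) :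
    (∑ i, -(p i) * Real.log (p i) =
        ∑ i, -((p i + (1 - p i) / ((C : ℝ) - 1)) / 2) *
          Real.log ((p i + (1 - p i) / ((C : ℝ) - 1)) / 2)) ↔
      ∀ i, p i = 1 / C := by
  have hC1 : (1:ℝ) ≤ (C:ℝ) - 1 := by
    have : (2:ℝ) ≤ (C:ℝ) := by exact_mod_cast hC
    linarith
  have hC1pos : (0:ℝ) < (C:ℝ) - 1 := by linarith
  have hCpos : (0:ℝ) < (C:ℝ) := by linarith
  set f := Real.negMulLog with hf
  set pt : Fin C → ℝ := fun i => (1 - p i) / ((C:ℝ) - 1) with hptdef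
  have hple : ∀ i, p i ≤ 1 := by
    intro i
    calc p i ≤ ∑ j, p j := Finset.single_le_sum (fun j _ => hp j) (mem_univ i)
    _ = 1 := hsum
  have hpt0 : ∀ i, 0 ≤ pt i := fun i => div_nonneg (by linarith [hple i]) hC1pos.le
  have hq0 : ∀ i, 0 ≤ (p i + pt i) / 2 := fun i => by have := hpt0 i; have := hp i; linarith
  constructor
  · intro heq i
    -- Step A: ∑ f (pt i) ≥ ∑ f (p i)
    have stepA : ∑ j, f (p j) ≤ ∑ j, f (pt j) := by
      have h1 : ∀ j : Fin C, ∑ k ∈ univ.erase j, (1/((C:ℝ)-1)) • f (p k) ≤ f (pt j) := by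
        intro j
        have hcard : ((univ.erase j).card : ℝ) = (C:ℝ) - 1 := by
          rw [Finset.card_erase_of_mem (mem_univ j), Finset.card_univ, Fintype.card_fin]
          have : (1:ℕ) ≤ C := by omega
          push_cast [this]
          ring
        have hw : ∑ k ∈ univ.erase j, (1/((C:ℝ)-1)) = 1 := by
          rw [Finset.sum_const, nsmul_eq_mul, hcard]
          field_simp
        have := Real.concaveOn_negMulLog.le_map_sum
          (t := univ.erase j) (w := fun _ => 1/((C:ℝ)-1)) (p := p)
          (fun k _ => by positivity) hw (fun k _ => Set.mem_Ici.mpr (hp k))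
        refine this.trans (le_of_eq ?_)
        rw [hf]
        congr 1
        rw [← Finset.smul_sum, Finset.sum_erase_eq_sub (mem_univ j), hsum]
        simp [hptdef, smul_eq_mul]
        ring
      calc ∑ j, f (p j)
          = ∑ j, ∑ k ∈ univ.erase j, (1/((C:ℝ)-1)) • f (p k) := by
            rw [eq_comm]
            have : ∀ j : Fin C, ∑ k ∈ univ.erase j, (1/((C:ℝ)-1)) • f (p k)
                = (1/((C:ℝ)-1)) * (∑ k, f (p k) - f (p j)) := by
              intro j
              rw [← Finset.smul_sum, Finset.sum_erase_eq_sub (mem_univ j)]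
              simp [smul_eq_mul]
            rw [Finset.sum_congr rfl (fun j _ => this j)]
            rw [← Finset.mul_sum]
            rw [Finset.sum_sub_distrib, Finset.sum_const, Finset.card_univ, Fintype.card_fin]
            field_simp
            ring
        _ ≤ ∑ j, f (pt j) := Finset.sum_le_sum (fun j _ => h1 j)
    -- Step B: termwise midpoint concavity
    have stepB : ∀ j : Fin C, (f (p j) + f (pt j)) / 2 ≤ f ((p j + pt j)/2) := by
      intro j
      have h := Real.concaveOn_negMulLog.2 (Set.mem_Ici.mpr (hp j)) (Set.mem_Ici.mpr (hpt0 j))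
        (by norm_num : (0:ℝ) ≤ 1/2) (by norm_num : (0:ℝ) ≤ 1/2) (by norm_num)
      simp only [smul_eq_mul] at h
      have e1 : (1/2) * p j + (1/2) * pt j = (p j + pt j)/2 := by ring
      rw [e1] at h
      linarith
    -- rewrite heq in terms of f
    have heq' : ∑ j, f (p j) = ∑ j, f ((p j + pt j)/2) := by
      simpa [hf, Real.negMulLog, hptdef] using heq
    -- sum of nonneg d's equals ≤ 0  ⇒ all zero
    have hd0 : ∀ j ∈ (univ : Finset (Fin C)),
        (0:ℝ) ≤ f ((p j + pt j)/2) - (f (p j) + f (pt j)) / 2 :=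
      fun j _ => by linarith [stepB j]
    have hsumd : ∑ j, (f ((p j + pt j)/2) - (f (p j) + f (pt j)) / 2) ≤ 0 := by
      rw [Finset.sum_sub_distrib]
      have : ∑ j, (f (p j) + f (pt j)) / 2 = (∑ j, f (p j) + ∑ j, f (pt j)) / 2 := by
        rw [← Finset.sum_add_distrib, ← Finset.sum_div]
      rw [this, ← heq']
      linarith [stepA]
    have hzero : ∀ j ∈ (univ : Finset (Fin C)),
        f ((p j + pt j)/2) - (f (p j) + f (pt j)) / 2 = 0 := by
      intro j hj
      by_contra hne
      have hlt : 0 < f ((p j + pt j)/2) - (f (p j) + f (pt j)) / 2 :=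
        lt_of_le_of_ne (hd0 j hj) (Ne.symm hne)
      have : 0 < ∑ k, (f ((p k + pt k)/2) - (f (p k) + f (pt k)) / 2) :=
        Finset.sum_pos' hd0 ⟨j, hj, hlt⟩
      linarith
    -- strict concavity forces p i = pt i
    have hppt : p i = pt i := by
      by_contra hne
      have := Real.strictConcaveOn_negMulLog.2 (Set.mem_Ici.mpr (hp i))
        (Set.mem_Ici.mpr (hpt0 i)) hne
        (by norm_num : (0:ℝ) < 1/2) (by norm_num : (0:ℝ) < 1/2) (by norm_num)
      have h2 : (f (p i) + f (pt i)) / 2 < f ((p i + pt i)/2) := by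
        have := this
        simp only [smul_eq_mul] at this
        calc (f (p i) + f (pt i)) / 2 = (1/2) * f (p i) + (1/2) * f (pt i) := by ring
        _ < f ((1/2) * p i + (1/2) * pt i) := this
        _ = f ((p i + pt i)/2) := by ring_nf
      have := hzero i (mem_univ i)
      linarith
    -- solve
    have : p i * ((C:ℝ) - 1) = 1 - p i := by
      simp only [hptdef] at hppt
      rw [eq_div_iff hC1pos.ne'] at hppt
      linarith [hppt]
    have hC0 : (C:ℝ) ≠ 0 := ne_of_gt hCpos
    field_simp
    linarith [this]
  · intro hu
    apply Finset.sum_congr rfl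
    intro i _
    rw [hu i]
    have h1 : ((1:ℝ)/C + (1 - 1/C) / ((C:ℝ) - 1)) / 2 = 1/C := by
      field_simp
      ring
    rw [h1]
end

section
/- Let C ≥ 2 and let p, r : Fin C → ℝ be probability vectors such that for every i, |r i - 1/C| ≤ |p i - 1/C| and r i - 1/C and p i - 1/C have the same sign (i.e. r i lies between p i and 1/C). Then H(p) ≤ H(r), where H denotes Shannon entropy. -/
/-!
Concavity of `negMulLog` gives the tangent bound
`negMulLog p ≤ negMulLog r + (-log r - 1) * (p - r)` (Gibbs' inequality, coordinatewise).
When `r` lies between `p` and a constant `c > 0`, the factors `r - p` and `log r - log c` have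
opposite signs, so the slope `-log r - 1` may be replaced by the constant `-log c - 1`; that term
sums to zero because `∑ r = ∑ p`. The uniform value `c = 1 / C` is one such constant.
-/

open Real Set Finset

lemma Set.mem_uIcc_of_abs_sub_le_of_mul_nonneg {α : Type*} [Field α] [LinearOrder α]
    [IsStrictOrderedRing α] {a b x : α} (hdist : |b - a| ≤ |x - a|)
    (hside : 0 ≤ (b - a) * (x - a)) : b ∈ uIcc a x := by
  rcases le_total a x with hax | hxa
  · rw [uIcc_of_le hax]
    rcases hax.eq_or_lt with rfl | hax
    · simp_all [sub_eq_zero, eq_comm]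
    have hab : a ≤ b := by nlinarith
    rw [abs_of_nonneg (sub_nonneg.2 hab), abs_of_nonneg (sub_nonneg.2 hax.le)] at hdist
    exact ⟨hab, by linarith⟩
  · rw [uIcc_of_ge hxa]
    rcases hxa.eq_or_lt with rfl | hxa
    · simp_all [sub_eq_zero]
    have hba : b ≤ a := by nlinarith
    rw [abs_of_nonpos (sub_nonpos.2 hba), abs_of_nonpos (sub_nonpos.2 hxa.le)] at hdist
    exact ⟨by linarith, hba⟩

lemma Real.negMulLog_le_tangent {p r : ℝ} (hp : 0 ≤ p) (hr : 0 < r) :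
    negMulLog p ≤ negMulLog r + (-log r - 1) * (p - r) := by
  have hpr : r * (p / r) = p := mul_div_cancel₀ p hr.ne'
  calc negMulLog p = p / r * negMulLog r + r * negMulLog (p / r) := by
        rw [← negMulLog_mul, hpr]
    _ ≤ p / r * negMulLog r + r * (1 - p / r) := by
        gcongr
        exact negMulLog_le_one_sub_self (div_nonneg hp hr.le)
    _ = negMulLog r + (-log r - 1) * (p - r) := by
        field_simp
        simp only [negMulLog]
        ring

lemma Real.negMulLog_le_add_of_mem_uIcc {c p r : ℝ} (hc : 0 < c) (hp : 0 ≤ p)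
    (hr : r ∈ uIcc c p) : negMulLog p ≤ negMulLog r + (r - p) * (log c + 1) := by
  rcases le_total p c with hpc | hcp
  · obtain ⟨hpr, hrc⟩ : p ≤ r ∧ r ≤ c := by rwa [uIcc_of_ge hpc] at hr
    rcases (hp.trans hpr).eq_or_lt with hr0 | hr0
    · obtain rfl : p = 0 := by linarith
      simp [← hr0]
    · have hslope := mul_le_mul_of_nonneg_left (log_le_log hr0 hrc) (sub_nonneg.2 hpr)
      linear_combination negMulLog_le_tangent hp hr0 + hslope
  · obtain ⟨hcr, hrp⟩ : c ≤ r ∧ r ≤ p := by rwa [uIcc_of_le hcp] at hr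
    have hr0 := hc.trans_le hcr
    have hslope := mul_le_mul_of_nonpos_left (log_le_log hc hcr) (sub_nonpos.2 hrp)
    linear_combination negMulLog_le_tangent hp hr0 + hslope

theorem Real.sum_negMulLog_le_of_mem_uIcc {ι : Type*} [Fintype ι] {c : ℝ} (hc : 0 < c)
    {p r : ι → ℝ} (hp : ∀ i, 0 ≤ p i) (hsum : ∑ i, r i = ∑ i, p i)
    (hr : ∀ i, r i ∈ uIcc c (p i)) : ∑ i, negMulLog (p i) ≤ ∑ i, negMulLog (r i) := by
  have hshift : ∑ i, (r i - p i) * (log c + 1) = 0 := by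
    rw [← Finset.sum_mul, Finset.sum_sub_distrib, hsum, sub_self, zero_mul]
  calc ∑ i, negMulLog (p i) ≤ ∑ i, (negMulLog (r i) + (r i - p i) * (log c + 1)) :=
        Finset.sum_le_sum fun i _ => negMulLog_le_add_of_mem_uIcc hc (hp i) (hr i)
    _ = ∑ i, negMulLog (r i) := by rw [Finset.sum_add_distrib, hshift, add_zero]

theorem entropy_mono_pointwise_toward_uniform_general (C : ℕ)
    (p r : Fin C → ℝ)
    (hp : ∀ i, 0 ≤ p i) (hpsum : ∑ i, p i = 1)
    (hrsum : ∑ i, r i = 1)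
    (hclose : ∀ i, |r i - 1 / C| ≤ |p i - 1 / C|)
    (hsign : ∀ i, 0 ≤ (r i - 1 / C) * (p i - 1 / C)) :
    ∑ i, -(p i) * Real.log (p i) ≤ ∑ i, -(r i) * Real.log (r i) := by
  have hC : 0 < C := Nat.pos_of_ne_zero fun h => by subst h; simp at hpsum
  exact sum_negMulLog_le_of_mem_uIcc (by positivity) hp (hrsum.trans hpsum.symm)
    fun i => mem_uIcc_of_abs_sub_le_of_mul_nonneg (hclose i) (hsign i)

/-- Schur-type monotonicity: if every coordinate of `r` lies between the
corresponding coordinate of `p` and the uniform value `1/C` (same side,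
smaller deviation), then `r` has at least the entropy of `p`. -/
theorem entropy_mono_pointwise_toward_uniform (C : ℕ) (hC : 2 ≤ C)
    (p r : Fin C → ℝ)
    (hp : ∀ i, 0 ≤ p i) (hpsum : ∑ i, p i = 1)
    (hr : ∀ i, 0 ≤ r i) (hrsum : ∑ i, r i = 1)
    (hclose : ∀ i, |r i - 1 / C| ≤ |p i - 1 / C|)
    (hsign : ∀ i, 0 ≤ (r i - 1 / C) * (p i - 1 / C)) :
    ∑ i, -(p i) * Real.log (p i) ≤ ∑ i, -(r i) * Real.log (r i) :=
  entropy_mono_pointwise_toward_uniform_general C p r hp hpsum hrsum hclose hsign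
end

section
/- Let C ≥ 2 and let p : Fin C → ℝ be a probability vector (p i ≥ 0 for all i and ∑ i, p i = 1). Define p̃ i = (1 - p i)/(C - 1) and q i = (p i + p̃ i)/2. Then the total variation distance of q to the uniform distribution u (u i = 1/C for all i) is at most that of p: (1/2) * ∑ i, |q i - 1/C| ≤ (1/2) * ∑ i, |p i - 1/C|, and in fact ∑ i, |q i - 1/C| = ((C-2)/(2*(C-1))) * ∑ i, |p i - 1/C|. -/
/-! Mixing `p` with its different-class resampling is an affine map fixing the uniform
distribution: each coordinate's deviation `p i - 1/C` is scaled by `(C-2)/(2(C-1)) ∈ [0, 1)`,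
so the sum of absolute deviations is scaled by the same factor. -/

open Finset

lemma mixture_sub_inv_eq {c : ℝ} (hc : c ≠ 0) (hc1 : c - 1 ≠ 0) (x : ℝ) :
    (x + (1 - x) / (c - 1)) / 2 - 1 / c = (c - 2) / (2 * (c - 1)) * (x - 1 / c) := by
  field_simp
  ring

lemma contraction_factor_nonneg {c : ℝ} (hc : 2 ≤ c) : 0 ≤ (c - 2) / (2 * (c - 1)) :=
  div_nonneg (by linarith) (by linarith)

lemma contraction_factor_le_one {c : ℝ} (hc : 2 ≤ c) : (c - 2) / (2 * (c - 1)) ≤ 1 :=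
  (div_le_one (by linarith)).2 (by linarith)

theorem mixture_tv_contraction_general (C : ℕ) (hC : 2 ≤ C) (p : Fin C → ℝ) :
    (1 / 2) * ∑ i, |(p i + (1 - p i) / ((C : ℝ) - 1)) / 2 - 1 / C| ≤
        (1 / 2) * ∑ i, |p i - 1 / C| ∧
      ∑ i, |(p i + (1 - p i) / ((C : ℝ) - 1)) / 2 - 1 / C| =
        (((C : ℝ) - 2) / (2 * ((C : ℝ) - 1))) * ∑ i, |p i - 1 / C| := by
  have hC2 : (2 : ℝ) ≤ C := by exact_mod_cast hC
  have hsum_eq : ∑ i, |(p i + (1 - p i) / ((C : ℝ) - 1)) / 2 - 1 / C| =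
      (((C : ℝ) - 2) / (2 * ((C : ℝ) - 1))) * ∑ i, |p i - 1 / C| := by
    simp_rw [mixture_sub_inv_eq (by linarith : (C : ℝ) ≠ 0) (by linarith), abs_mul,
      abs_of_nonneg (contraction_factor_nonneg hC2), ← mul_sum]
  refine ⟨?_, hsum_eq⟩
  rw [hsum_eq]
  gcongr
  exact mul_le_of_le_one_left (sum_nonneg fun i _ => abs_nonneg _) (contraction_factor_le_one hC2)

/-- Regression toward the mean in total variation: the mixture `q = (p + p̃)/2`
is at least as close to uniform as `p`, with an exact contraction factor
`(C-2)/(2*(C-1))`. -/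
theorem mixture_tv_contraction (C : ℕ) (hC : 2 ≤ C) (p : Fin C → ℝ)
    (hp : ∀ i, 0 ≤ p i) (hsum : ∑ i, p i = 1) :
    (1 / 2) * ∑ i, |(p i + (1 - p i) / ((C : ℝ) - 1)) / 2 - 1 / C| ≤
        (1 / 2) * ∑ i, |p i - 1 / C| ∧
      ∑ i, |(p i + (1 - p i) / ((C : ℝ) - 1)) / 2 - 1 / C| =
        (((C : ℝ) - 2) / (2 * ((C : ℝ) - 1))) * ∑ i, |p i - 1 / C| :=
  mixture_tv_contraction_general C hC p
end

section
/- Let C ≥ 3 and let p : Fin C → ℝ be a probability vector (p i ≥ 0 for all i and ∑ i, p i = 1) that is not uniform (there exists i with p i ≠ 1/C). Define p̃ i = (1 - p i)/(C - 1). Then the entropy inequality is strict: H(p) < H(p̃), where H denotes Shannon entropy. -/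
open Finset Real

/-- Strict entropy increase of the different-class resampling for `C ≥ 3` and
non-uniform `p`. -/
theorem resampled_entropy_lt (C : ℕ) (hC : 3 ≤ C) (p : Fin C → ℝ)
    (hp : ∀ i, 0 ≤ p i) (hsum : ∑ i, p i = 1)
    (hnonunif : ∃ i, p i ≠ 1 / C) :
    ∑ i, -(p i) * Real.log (p i) <
      ∑ i, -((1 - p i) / ((C : ℝ) - 1)) *
        Real.log ((1 - p i) / ((C : ℝ) - 1)) := by
  have hCpos : (0 : ℝ) < (C : ℝ) - 1 := by
    have : (3 : ℝ) ≤ C := by exact_mod_cast hC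
    linarith
  set w : ℝ := 1 / ((C : ℝ) - 1) with hw
  have hwpos : 0 < w := by positivity
  -- there exist two coordinates with distinct values
  have hjk : ∃ j k : Fin C, p j ≠ p k := by
    by_contra h
    push_neg at h
    obtain ⟨i, hi⟩ := hnonunif
    apply hi
    have : ∑ j : Fin C, p i = 1 := by
      rw [← hsum]; exact Finset.sum_congr rfl fun j _ => (h i j)
    rw [Finset.sum_const, Finset.card_univ, Fintype.card_fin, nsmul_eq_mul] at this
    have hCne : (C : ℝ) ≠ 0 := by positivity
    field_simp
    linarith [this]
  obtain ⟨j, k, hjkne⟩ := hjk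
  have hjk' : j ≠ k := fun h => hjkne (by rw [h])
  -- find an index distinct from j and k
  have hi0 : ∃ i0 : Fin C, i0 ≠ j ∧ i0 ≠ k := by
    have hle2 : ({j, k} : Finset (Fin C)).card ≤ 2 :=
      Finset.card_insert_le _ _ |>.trans (by simp)
    have hpos : 0 < ({j, k} : Finset (Fin C))ᶜ.card := by
      rw [Finset.card_compl, Fintype.card_fin]; omega
    obtain ⟨i0, hi0⟩ := Finset.card_pos.mp hpos
    rw [Finset.mem_compl, Finset.mem_insert, Finset.mem_singleton] at hi0
    push_neg at hi0
    exact ⟨i0, hi0⟩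
  obtain ⟨i0, hi0j, hi0k⟩ := hi0
  have hple : ∀ i, p i ≤ 1 := by
    intro i
    calc p i = ∑ x ∈ {i}, p x := by simp
      _ ≤ ∑ x, p x := Finset.sum_le_sum_of_subset_of_nonneg (by simp) (fun x _ _ => hp x)
      _ = 1 := hsum
  -- key: for each i, Jensen over the erase set
  have hmix : ∀ i : Fin C, ∑ x ∈ Finset.univ.erase i, w • p x
      = (1 - p i) / ((C : ℝ) - 1) := by
    intro i
    rw [← Finset.smul_sum, Finset.sum_erase_eq_sub (Finset.mem_univ i), hsum]
    simp [hw, smul_eq_mul]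
    ring
  have hwsum : ∀ i : Fin C, ∑ _x ∈ Finset.univ.erase i, w = 1 := by
    intro i
    rw [Finset.sum_const, Finset.card_erase_of_mem (Finset.mem_univ i),
      Finset.card_univ, Fintype.card_fin]
    have : ((C - 1 : ℕ) : ℝ) = (C : ℝ) - 1 := by
      have : 1 ≤ C := by omega
      push_cast [this]; ring
    rw [nsmul_eq_mul, this, hw]
    field_simp
  have hmem : ∀ x : Fin C, p x ∈ Set.Ici (0 : ℝ) := fun x => hp x
  have hle : ∀ i : Fin C, ∑ x ∈ Finset.univ.erase i, w • Real.negMulLog (p x)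
      ≤ Real.negMulLog ((1 - p i) / ((C : ℝ) - 1)) := by
    intro i
    rw [← hmix i]
    exact Real.concaveOn_negMulLog.le_map_sum (fun x _ => hwpos.le) (hwsum i)
      (fun x _ => hmem x)
  have hlt : ∑ x ∈ Finset.univ.erase i0, w • Real.negMulLog (p x)
      < Real.negMulLog ((1 - p i0) / ((C : ℝ) - 1)) := by
    rw [← hmix i0]
    exact Real.strictConcaveOn_negMulLog.lt_map_sum (fun x _ => hwpos) (hwsum i0)
      (fun x _ => hmem x)
      ⟨j, Finset.mem_erase.2 ⟨hi0j.symm, Finset.mem_univ j⟩,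
       k, Finset.mem_erase.2 ⟨hi0k.symm, Finset.mem_univ k⟩, hjkne⟩
  -- sum over i
  have hsum_lt : ∑ i, (∑ x ∈ Finset.univ.erase i, w • Real.negMulLog (p x))
      < ∑ i, Real.negMulLog ((1 - p i) / ((C : ℝ) - 1)) :=
    Finset.sum_lt_sum (fun i _ => hle i) ⟨i0, Finset.mem_univ i0, hlt⟩
  -- left side equals ∑ negMulLog (p i)
  have hleft : ∑ i, (∑ x ∈ Finset.univ.erase i, w • Real.negMulLog (p x))
      = ∑ i, Real.negMulLog (p i) := by
    have : ∀ i : Fin C, ∑ x ∈ Finset.univ.erase i, w • Real.negMulLog (p x)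
        = w * ((∑ x, Real.negMulLog (p x)) - Real.negMulLog (p i)) := by
      intro i
      rw [← Finset.smul_sum, Finset.sum_erase_eq_sub (Finset.mem_univ i), smul_eq_mul]
    rw [Finset.sum_congr rfl fun i _ => this i]
    rw [← Finset.mul_sum]
    simp only [Finset.sum_sub_distrib, Finset.sum_const, Finset.card_univ, Fintype.card_fin,
      nsmul_eq_mul]
    have hC1 : ((C : ℝ) - 1) ≠ 0 := ne_of_gt hCpos
    rw [hw]
    field_simp
  have := hleft ▸ hsum_lt
  simpa [Real.negMulLog] using this
end

section
/- Let C ≥ 2 and let p : Fin C → ℝ be a probability vector (p i ≥ 0 for all i and ∑ i, p i = 1). Define p̃ i = (1 - p i)/(C - 1) and q i = (p i + p̃ i)/2. If p is not uniform (there exists i with p i ≠ 1/C), then H(p) < H(q), where H denotes Shannon entropy. -/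
/-- Strict form of Theorem 1: if `p` is not uniform then the mixture
`q = (p + p̃)/2` has strictly larger entropy. -/
theorem mixture_entropy_lt_of_nonuniform (C : ℕ) (hC : 2 ≤ C) (p : Fin C → ℝ)
    (hp : ∀ i, 0 ≤ p i) (hsum : ∑ i, p i = 1)
    (hnonunif : ∃ i, p i ≠ 1 / C) :
    ∑ i, -(p i) * Real.log (p i) <
      ∑ i, -((p i + (1 - p i) / ((C : ℝ) - 1)) / 2) *
        Real.log ((p i + (1 - p i) / ((C : ℝ) - 1)) / 2) := by
  have hC2 : (2 : ℝ) ≤ (C : ℝ) := by exact_mod_cast hC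
  have hCpos : (0 : ℝ) < (C : ℝ) := by linarith
  have hC1 : (0 : ℝ) < (C : ℝ) - 1 := by linarith
  set Cr : ℝ := (C : ℝ) with hCr
  set a : ℝ := (Cr - 2) / (2 * (Cr - 1)) with ha_def
  have ha0 : 0 ≤ a := div_nonneg (by linarith) (by linarith)
  have hb : 1 - a = Cr / (2 * (Cr - 1)) := by
    rw [ha_def]; field_simp; ring
  have hb0 : 0 < 1 - a := by rw [hb]; positivity
  -- rewrite goal in terms of negMulLog
  show ∑ i, Real.negMulLog (p i) <
      ∑ i, Real.negMulLog ((p i + (1 - p i) / (Cr - 1)) / 2)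
  -- strict Jensen: entropy of p is < log C
  have hnonconst : ∃ j : Fin C, ∃ k : Fin C, p j ≠ p k := by
    by_contra h
    push_neg at h
    obtain ⟨i, hi⟩ := hnonunif
    apply hi
    have : ∑ j, p j = C * p i := by
      rw [Finset.sum_congr rfl fun j _ => h j i]
      simp [Finset.card_univ, mul_comm]
    rw [hsum] at this
    field_simp
    linarith
  have hmem : ∀ i ∈ (Finset.univ : Finset (Fin C)), p i ∈ Set.Ici (0:ℝ) :=
    fun i _ => hp i
  have hw : ∑ _i : Fin C, (1 / Cr) = 1 := by
    rw [Finset.sum_const, Finset.card_univ, Fintype.card_fin, nsmul_eq_mul]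
    field_simp
    exact hCr.symm
  have hjensen := Real.strictConcaveOn_negMulLog.lt_map_sum
    (w := fun _ : Fin C => 1 / Cr) (p := p) (t := Finset.univ)
    (fun i _ => by positivity) hw hmem
    (by obtain ⟨j, k, hjk⟩ := hnonconst; exact ⟨j, Finset.mem_univ j, k, Finset.mem_univ k, hjk⟩)
  have hsum' : ∑ i : Fin C, (1 / Cr) • p i = 1 / Cr := by
    simp only [smul_eq_mul, ← Finset.mul_sum, hsum, mul_one]
  rw [hsum'] at hjensen
  have hlogC : Cr * Real.negMulLog (1 / Cr) = Real.log Cr := by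
    rw [Real.negMulLog, one_div, Real.log_inv]
    field_simp
  have hHp : ∑ i, Real.negMulLog (p i) < Real.log Cr := by
    have := mul_lt_mul_of_pos_left hjensen hCpos
    rw [hlogC] at this
    calc ∑ i, Real.negMulLog (p i)
        = Cr * ∑ i : Fin C, (1 / Cr) • Real.negMulLog (p i) := by
          rw [Finset.mul_sum]
          congr 1; ext i
          rw [smul_eq_mul]; field_simp
      _ < Real.log Cr := this
  -- pointwise concavity
  have hpt : ∀ i, a * Real.negMulLog (p i) + (1 - a) * Real.negMulLog (1 / Cr)
      ≤ Real.negMulLog ((p i + (1 - p i) / (Cr - 1)) / 2) := by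
    intro i
    have hcomb := Real.concaveOn_negMulLog.2 (Set.mem_Ici.2 (hp i))
      (Set.mem_Ici.2 (by positivity : (0:ℝ) ≤ 1 / Cr)) ha0 hb0.le (by ring)
    simp only [smul_eq_mul] at hcomb
    have heq : a * p i + (1 - a) * (1 / Cr) = (p i + (1 - p i) / (Cr - 1)) / 2 := by
      rw [hb, ha_def]
      field_simp
      ring
    rw [heq] at hcomb
    exact hcomb
  have hsumpt : a * (∑ i, Real.negMulLog (p i)) + (1 - a) * Real.log Cr
      ≤ ∑ i, Real.negMulLog ((p i + (1 - p i) / (Cr - 1)) / 2) := by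
    calc a * (∑ i, Real.negMulLog (p i)) + (1 - a) * Real.log Cr
        = ∑ i : Fin C, (a * Real.negMulLog (p i) + (1 - a) * Real.negMulLog (1 / Cr)) := by
          rw [Finset.sum_add_distrib, ← Finset.mul_sum, Finset.sum_const, Finset.card_univ,
            Fintype.card_fin, nsmul_eq_mul, ← hlogC]
          ring
      _ ≤ _ := Finset.sum_le_sum fun i _ => hpt i
  nlinarith [hHp, hsumpt, hb0]
end

section
/- Let C ≥ 2 and let p : Fin C → ℝ be a probability vector with strictly positive entries (p i > 0 for all i and ∑ i, p i = 1). Define p̃ i = (1 - p i)/(C - 1) and q i = (p i + p̃ i)/2. Then the Kullback–Leibler divergence to the uniform distribution u (u i = 1/C) satisfies KL(q‖u) ≤ KL(p‖u), where KL(a‖u) = ∑ i, a i * Real.log (a i / (1/C)). Moreover KL(a‖u) = Real.log C - H(a), so this is equivalent to the entropy inequality of Theorem 1. -/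
/-- KL to uniform in terms of `∑ a log a`. -/
lemma kl_eq_aux (C : ℕ) (hc0 : (0:ℝ) < C) (a : Fin C → ℝ) (ha : ∀ i, 0 < a i)
    (hs : ∑ i, a i = 1) :
    ∑ i, a i * Real.log (a i / (1 / C)) =
      Real.log C + ∑ i, a i * Real.log (a i) := by
  have key : ∀ i, a i * Real.log (a i / (1 / C))
      = a i * Real.log (a i) + a i * Real.log C := by
    intro i
    have hd : a i / (1 / (C:ℝ)) = a i * C := by
      field_simp
    rw [hd, Real.log_mul (ne_of_gt (ha i)) (ne_of_gt hc0)]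
    ring
  rw [Finset.sum_congr rfl (fun i _ => key i), Finset.sum_add_distrib,
    ← Finset.sum_mul, hs]
  ring

/-- KL form of Theorem 1: the mixture `q = (p + p̃)/2` is at least as close (in
KL divergence) to the uniform distribution as `p`, and for each of `p`, `q` the
divergence to uniform equals `log C` minus the Shannon entropy. -/
theorem mixture_kl_to_uniform_le (C : ℕ) (hC : 2 ≤ C) (p : Fin C → ℝ)
    (hp : ∀ i, 0 < p i) (hsum : ∑ i, p i = 1) :
    (∑ i, ((p i + (1 - p i) / ((C : ℝ) - 1)) / 2) *
          Real.log (((p i + (1 - p i) / ((C : ℝ) - 1)) / 2) / (1 / C)) ≤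
        ∑ i, p i * Real.log (p i / (1 / C))) ∧
      (∑ i, p i * Real.log (p i / (1 / C)) =
        Real.log C - ∑ i, -(p i) * Real.log (p i)) ∧
      (∑ i, ((p i + (1 - p i) / ((C : ℝ) - 1)) / 2) *
          Real.log (((p i + (1 - p i) / ((C : ℝ) - 1)) / 2) / (1 / C)) =
        Real.log C - ∑ i, -((p i + (1 - p i) / ((C : ℝ) - 1)) / 2) *
          Real.log ((p i + (1 - p i) / ((C : ℝ) - 1)) / 2)) := by
  have hc2 : (2:ℝ) ≤ (C:ℝ) := by exact_mod_cast hC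
  have hc0 : (0:ℝ) < C := by linarith
  have hc1 : (1:ℝ) < C := by linarith
  have hc1' : (C:ℝ) - 1 ≠ 0 := ne_of_gt (by linarith)
  have h2c : (2:ℝ) * ((C:ℝ) - 1) ≠ 0 := ne_of_gt (by linarith)
  -- each p i < 1
  have hplt : ∀ i, p i < 1 := by
    intro i
    have : Nontrivial (Fin C) := Fin.nontrivial_iff_two_le.mpr hC
    obtain ⟨j, hj⟩ := exists_ne i
    have := Finset.single_lt_sum hj (Finset.mem_univ i) (Finset.mem_univ j)
      (hp j) (fun k _ _ => (hp k).le)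
    linarith [hsum ▸ this]
  set q : Fin C → ℝ := fun i => (p i + (1 - p i) / ((C:ℝ) - 1)) / 2 with hqdef
  have hq0 : ∀ i, 0 < q i := by
    intro i
    have h1 : 0 ≤ (1 - p i) / ((C:ℝ) - 1) :=
      div_nonneg (by linarith [hplt i]) (by linarith)
    have := hp i
    simp only [hqdef]
    linarith
  -- sum of q is 1
  have hsq : ∑ i, q i = 1 := by
    have h1 : ∑ i, (1 - p i) = (C:ℝ) - 1 := by
      rw [Finset.sum_sub_distrib, hsum]
      simp [Finset.card_univ]
    simp only [hqdef]
    rw [← Finset.sum_div, Finset.sum_add_distrib, ← Finset.sum_div, h1, hsum,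
      div_self hc1']
    norm_num
  set α : ℝ := ((C:ℝ) - 2) / (2 * ((C:ℝ) - 1)) with hαdef
  have hα0 : 0 ≤ α := div_nonneg (by linarith) (by linarith)
  have hβ : 1 - α = (C:ℝ) / (2 * ((C:ℝ) - 1)) := by
    rw [hαdef]
    field_simp
    ring
  have hβ0 : 0 < 1 - α := by
    rw [hβ]
    have h1 : (0:ℝ) < 2 * ((C:ℝ) - 1) := by linarith
    exact div_pos hc0 h1
  -- q as a convex combination of p and uniform
  have hqmix : ∀ i, q i = α * p i + (1 - α) * (1 / (C:ℝ)) := by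
    intro i
    rw [hβ]
    simp only [hqdef, hαdef]
    have hc0' : (C:ℝ) ≠ 0 := ne_of_gt hc0
    field_simp
    ring
  -- convexity of x log x
  have hconv : ∀ i, q i * Real.log (q i) ≤
      α * (p i * Real.log (p i)) + (1 - α) * ((1/(C:ℝ)) * Real.log (1/(C:ℝ))) := by
    intro i
    have h := Real.convexOn_mul_log.2 (Set.mem_Ici.mpr (hp i).le)
      (Set.mem_Ici.mpr (by positivity : (0:ℝ) ≤ 1/(C:ℝ))) hα0 hβ0.le (by ring)
    simp only [smul_eq_mul] at h
    rw [hqmix i]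
    exact h
  have hulog : (1/(C:ℝ)) * Real.log (1/(C:ℝ)) = -(1/(C:ℝ)) * Real.log C := by
    rw [one_div, Real.log_inv]
    ring
  -- sum of convexity bounds
  have hSsum : ∑ i, q i * Real.log (q i) ≤
      α * ∑ i, p i * Real.log (p i) - (1 - α) * Real.log C := by
    have := Finset.sum_le_sum (fun i (_ : i ∈ Finset.univ) => hconv i)
    rw [Finset.sum_add_distrib, ← Finset.mul_sum, ← Finset.mul_sum] at this
    have hcard : ∑ _i : Fin C, ((1/(C:ℝ)) * Real.log (1/(C:ℝ)))
        = -Real.log C := by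
      rw [Finset.sum_const, Finset.card_univ, Fintype.card_fin, hulog,
        nsmul_eq_mul]
      field_simp
    rw [hcard] at this
    linarith
  -- Gibbs: 0 ≤ log C + ∑ p log p
  have hGibbs : 0 ≤ Real.log C + ∑ i, p i * Real.log (p i) := by
    have hpt : ∀ i, p i - 1/(C:ℝ) ≤ p i * Real.log C + p i * Real.log (p i) := by
      intro i
      have hx : (0:ℝ) < 1 / ((C:ℝ) * p i) :=
        div_pos one_pos (mul_pos hc0 (hp i))
      have h := Real.log_le_sub_one_of_pos hx
      rw [one_div, Real.log_inv,
        Real.log_mul (ne_of_gt hc0) (ne_of_gt (hp i))] at h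
      have h2 := mul_le_mul_of_nonneg_left h (hp i).le
      have h3 : p i * (((C:ℝ) * p i)⁻¹ - 1) = 1/(C:ℝ) - p i := by
        have hpi := (hp i).ne'
        field_simp
      rw [h3] at h2
      nlinarith [hp i]
    have := Finset.sum_le_sum (fun i (_ : i ∈ Finset.univ) => hpt i)
    rw [Finset.sum_sub_distrib, hsum, Finset.sum_add_distrib,
      ← Finset.sum_mul, hsum] at this
    have hconst : ∑ _i : Fin C, (1/(C:ℝ)) = 1 := by
      rw [Finset.sum_const, Finset.card_univ, Fintype.card_fin, nsmul_eq_mul]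
      field_simp
    rw [hconst] at this
    linarith
  -- main inequality between ∑ x log x
  have hmain : ∑ i, q i * Real.log (q i) ≤ ∑ i, p i * Real.log (p i) := by
    nlinarith [hSsum, hGibbs, hβ0]
  have hklp := kl_eq_aux C hc0 p hp hsum
  have hklq := kl_eq_aux C hc0 q hq0 hsq
  have hnegp : ∑ i, -(p i) * Real.log (p i) = -∑ i, p i * Real.log (p i) := by
    simp [neg_mul]
  have hnegq : ∑ i, -(q i) * Real.log (q i) = -∑ i, q i * Real.log (q i) := by
    simp [neg_mul]
  refine ⟨?_, ?_, ?_⟩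
  · rw [show (∑ i, ((p i + (1 - p i) / ((C : ℝ) - 1)) / 2) *
        Real.log (((p i + (1 - p i) / ((C : ℝ) - 1)) / 2) / (1 / C)))
        = ∑ i, q i * Real.log (q i / (1 / C)) from rfl, hklq, hklp]
    linarith
  · rw [hklp, hnegp]; ring
  · rw [show (∑ i, ((p i + (1 - p i) / ((C : ℝ) - 1)) / 2) *
        Real.log (((p i + (1 - p i) / ((C : ℝ) - 1)) / 2) / (1 / C)))
        = ∑ i, q i * Real.log (q i / (1 / C)) from rfl, hklq]
    rw [show (∑ i, -((p i + (1 - p i) / ((C : ℝ) - 1)) / 2) *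
        Real.log ((p i + (1 - p i) / ((C : ℝ) - 1)) / 2))
        = ∑ i, -(q i) * Real.log (q i) from rfl, hnegq]
    ring
end
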